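/- A norm Φ on ℝ^{n+1} is partially monotone if and only if there exists a positively one-homogeneous convex function ω : [0,∞) × [0,∞) → [0,∞) satisfying ω(1,0) > 0, ω(0,1) > 0, and ω(s_1,s_2) ≤ ω(t_1,t_2) whenever 0 ≤ s_i ≤ t_i for i = 1,2, such that Φ(ξ̂, ξ_{n+1}) = ω(φ(ξ̂), |ξ_{n+1}|) for all (ξ̂, ξ_{n+1}) ∈ ℝ^{n+1}, where φ(ξ̂) = Φ(ξ̂, 0). -/

import Mathlib

open MeasureTheory Set Filter

noncomputable section

/-- `ℝ^n` with the Euclidean norm. -/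
abbrev Rn (n : ℕ) := EuclideanSpace ℝ (Fin n)

/-- `ℝ^{n+1} = ℝ^n × ℝ`. -/
abbrev Rn1 (n : ℕ) := Rn n × ℝ

/-- Euclidean dot product on `ℝ^n`. -/
def dotn {n : ℕ} (x y : Rn n) : ℝ := ∑ i, x i * y i

/-- Euclidean dot product on `ℝ^{n+1} = ℝ^n × ℝ`. -/
def dotp {n : ℕ} (x y : Rn1 n) : ℝ := dotn x.1 y.1 + x.2 * y.2

/-- Euclidean norm on `ℝ^{n+1} = ℝ^n × ℝ`. -/
def enorm1 {n : ℕ} (x : Rn1 n) : ℝ := Real.sqrt (dotp x x)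

/-- `Ψ` is a norm on `ℝ^n`: convex, absolutely one-homogeneous and bounded
below by a positive multiple of the Euclidean norm. -/
def IsNormN {n : ℕ} (Ψ : Rn n → ℝ) : Prop :=
  ConvexOn ℝ univ Ψ ∧ (∀ (c : ℝ) (ξ : Rn n), Ψ (c • ξ) = |c| * Ψ ξ) ∧
    ∃ c > (0:ℝ), ∀ ξ, c * ‖ξ‖ ≤ Ψ ξ

/-- `Φ` is a norm on `ℝ^{n+1}`. -/
def IsNorm1 {n : ℕ} (Φ : Rn1 n → ℝ) : Prop :=
  ConvexOn ℝ univ Φ ∧ (∀ (c : ℝ) (ξ : Rn1 n), Φ (c • ξ) = |c| * Φ ξ) ∧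
    ∃ c > (0:ℝ), ∀ ξ, c * enorm1 ξ ≤ Φ ξ

/-- Dual norm on `ℝ^n`: `Ψ^o(ξ*) = sup {ξ*·ξ : Ψ(ξ) ≤ 1}`. -/
def dualN {n : ℕ} (Ψ : Rn n → ℝ) (xs : Rn n) : ℝ :=
  sSup ((fun ξ => dotn xs ξ) '' {ξ | Ψ ξ ≤ 1})

/-- Dual norm on `ℝ^{n+1}`. -/
def dual1 {n : ℕ} (Φ : Rn1 n → ℝ) (xs : Rn1 n) : ℝ :=
  sSup ((fun ξ => dotp xs ξ) '' {ξ | Φ ξ ≤ 1})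

/-- `Φ` is cylindrical over `φ`: `Φ(ξ̂,ξ_{n+1}) = max (φ(ξ̂), |ξ_{n+1}|)`. -/
def Cylindrical {n : ℕ} (Φ : Rn1 n → ℝ) (φ : Rn n → ℝ) : Prop :=
  ∀ ξ : Rn1 n, Φ ξ = max (φ ξ.1) |ξ.2|

/-- `A` is an open set compactly contained in `O`. -/
def CpCtd {E : Type*} [TopologicalSpace E] (A O : Set E) : Prop :=
  IsOpen A ∧ IsCompact (closure A) ∧ closure A ⊆ O

/-- Divergence of a vector field on `ℝ^n`. -/
def divN {n : ℕ} (η : Rn n → Rn n) (x : Rn n) : ℝ :=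
  ∑ i, fderiv ℝ η x (EuclideanSpace.single i (1:ℝ)) i

/-- Divergence of a vector field on `ℝ^{n+1} = ℝ^n × ℝ`. -/
def div1 {n : ℕ} (η : Rn1 n → Rn1 n) (z : Rn1 n) : ℝ :=
  (∑ i, (fderiv ℝ η z (EuclideanSpace.single i (1:ℝ), (0:ℝ))).1 i) +
    (fderiv ℝ η z ((0 : Rn n), (1:ℝ))).2

/-- Admissible test vector fields on `ℝ^n`: `C^1`, compactly supported in `A`,
with values in the unit ball of `Ψ`. -/
def TestN {n : ℕ} (A : Set (Rn n)) (Ψ : Rn n → ℝ) (η : Rn n → Rn n) : Prop :=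
  ContDiff ℝ 1 η ∧ HasCompactSupport η ∧ tsupport η ⊆ A ∧ ∀ x, Ψ (η x) ≤ 1

/-- Admissible test vector fields on `ℝ^{n+1}`. -/
def Test1 {n : ℕ} (A : Set (Rn1 n)) (Φ : Rn1 n → ℝ) (η : Rn1 n → Rn1 n) : Prop :=
  ContDiff ℝ 1 η ∧ HasCompactSupport η ∧ tsupport η ⊆ A ∧ ∀ z, Φ (η z) ≤ 1

/-- The set of numbers whose supremum is the anisotropic perimeter `P_Ψ(E,A)` in `ℝ^n`. -/
def perSetN {n : ℕ} (Ψ : Rn n → ℝ) (E A : Set (Rn n)) : Set ℝ :=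
  {r | ∃ η, TestN A Ψ η ∧ r = -∫ x in E, divN η x}

/-- Anisotropic perimeter `P_Ψ(E,A)` in `ℝ^n`. -/
def PerN {n : ℕ} (Ψ : Rn n → ℝ) (E A : Set (Rn n)) : ℝ := sSup (perSetN Ψ E A)

/-- `E` has locally finite perimeter in `O ⊆ ℝ^n`. -/
def BVlocSetN {n : ℕ} (O E : Set (Rn n)) : Prop :=
  ∀ A, CpCtd A O → BddAbove (perSetN (fun x => ‖x‖) E A)

/-- `E` is a minimizer of `P_Ψ` (by compact perturbations) in `O ⊆ ℝ^n`. -/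
def MinPerN {n : ℕ} (Ψ : Rn n → ℝ) (O E : Set (Rn n)) : Prop :=
  BVlocSetN O E ∧ ∀ A, CpCtd A O → ∀ F, BVlocSetN O F →
    IsCompact (closure (symmDiff E F)) → closure (symmDiff E F) ⊆ A →
      PerN Ψ E A ≤ PerN Ψ F A

/-- The set of numbers whose supremum is the anisotropic perimeter `P_Φ(E,A)` in `ℝ^{n+1}`. -/
def perSet1 {n : ℕ} (Φ : Rn1 n → ℝ) (E A : Set (Rn1 n)) : Set ℝ :=
  {r | ∃ η, Test1 A Φ η ∧ r = -∫ z in E, div1 η z}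

/-- Anisotropic perimeter `P_Φ(E,A)` in `ℝ^{n+1}`. -/
def Per1 {n : ℕ} (Φ : Rn1 n → ℝ) (E A : Set (Rn1 n)) : ℝ := sSup (perSet1 Φ E A)

/-- `E` has locally finite perimeter in `O ⊆ ℝ^{n+1}`. -/
def BVlocSet1 {n : ℕ} (O E : Set (Rn1 n)) : Prop :=
  ∀ A, CpCtd A O → BddAbove (perSet1 enorm1 E A)

/-- `E` is a minimizer of `P_Φ` (by compact perturbations) in `O ⊆ ℝ^{n+1}`. -/
def MinPer1 {n : ℕ} (Φ : Rn1 n → ℝ) (O E : Set (Rn1 n)) : Prop :=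
  BVlocSet1 O E ∧ ∀ A, CpCtd A O → ∀ F, BVlocSet1 O F →
    IsCompact (closure (symmDiff E F)) → closure (symmDiff E F) ⊆ A →
      Per1 Φ E A ≤ Per1 Φ F A

/-- The set of numbers whose supremum is the total variation `TV(u,A)`. -/
def varSet {n : ℕ} (A : Set (Rn n)) (u : Rn n → ℝ) : Set ℝ :=
  {r | ∃ η, TestN A (fun x => ‖x‖) η ∧ r = ∫ x in A, u x * divN η x}

/-- Total variation `TV(u,A)`. -/
def TV {n : ℕ} (u : Rn n → ℝ) (A : Set (Rn n)) : ℝ := sSup (varSet A u)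

/-- `u ∈ BV_loc(Ω̂)`. -/
def BVlocFun {n : ℕ} (Ω : Set (Rn n)) (u : Rn n → ℝ) : Prop :=
  (∀ A, CpCtd A Ω → IntegrableOn u A) ∧ ∀ A, CpCtd A Ω → BddAbove (varSet A u)

/-- The set of numbers whose supremum is `G_{Φ^o}(u,A)`. -/
def Gset {n : ℕ} (Φ : Rn1 n → ℝ) (A : Set (Rn n)) (u : Rn n → ℝ) : Set ℝ :=
  {r | ∃ η : Rn n → Rn1 n, ContDiff ℝ 1 η ∧ HasCompactSupport η ∧ tsupport η ⊆ A ∧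
    (∀ x, Φ (η x) ≤ 1) ∧ r = ∫ x in A, (u x * divN (fun y => (η y).1) x + (η x).2)}

/-- The functional `G_{Φ^o}(u,A)`. -/
def Gfun {n : ℕ} (Φ : Rn1 n → ℝ) (u : Rn n → ℝ) (A : Set (Rn n)) : ℝ := sSup (Gset Φ A u)

/-- `w` has compact support contained in `A`. -/
def CptSupp {n : ℕ} (A : Set (Rn n)) (w : Rn n → ℝ) : Prop :=
  IsCompact (tsupport w) ∧ tsupport w ⊆ A

/-- `u` is a minimizer of `G_{Φ^o}` by compact perturbations in `Ω̂`,
i.e. `u ∈ M_{Φ^o}(Ω̂)`. -/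
def MinG {n : ℕ} (Φ : Rn1 n → ℝ) (Ω : Set (Rn n)) (u : Rn n → ℝ) : Prop :=
  BVlocFun Ω u ∧ ∀ A, CpCtd A Ω → ∀ v, BVlocFun Ω v →
    CptSupp A (fun x => u x - v x) → Gfun Φ u A ≤ Gfun Φ v A

/-- `u` is a minimizer of the total variation by compact perturbations in `Ω̂`. -/
def MinTV {n : ℕ} (Ω : Set (Rn n)) (u : Rn n → ℝ) : Prop :=
  BVlocFun Ω u ∧ ∀ A, CpCtd A Ω → ∀ v, BVlocFun Ω v →
    CptSupp A (fun x => u x - v x) → TV u A ≤ TV v A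

/-- Subgraph of `u : Ω̂ → ℝ`. -/
def sg {n : ℕ} (Ω : Set (Rn n)) (u : Rn n → ℝ) : Set (Rn1 n) :=
  {p | p.1 ∈ Ω ∧ p.2 < u p.1}

/-- `S` is locally a Lipschitz graph at `p`. -/
def IsLocLipGraphAt {n : ℕ} (S : Set (Rn1 n)) (p : Rn1 n) : Prop :=
  ∃ U : Set (Rn1 n), IsOpen U ∧ p ∈ U ∧ ∃ e : Rn1 n, enorm1 e = 1 ∧
    ∃ g : Rn1 n → ℝ, (∃ L : NNReal, LipschitzOnWith L g {y | dotp y e = 0}) ∧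
      S ∩ U = {z | ∃ y, dotp y e = 0 ∧ z = y + g y • e} ∩ U

/-- `Φ` is a partially monotone norm on `ℝ^{n+1}`. -/
def PartMono {n : ℕ} (Φ : Rn1 n → ℝ) : Prop :=
  ∀ ξ η : Rn1 n, Φ (ξ.1, 0) ≤ Φ (η.1, 0) → Φ ((0 : Rn n), ξ.2) ≤ Φ ((0 : Rn n), η.2) →
    Φ ξ ≤ Φ η

end

/-!
Partial monotonicity says that `Φ(ξ)` depends only on the two numbers `φ(ξ̂) = Φ(ξ̂,0)` and
`|ξ_{n+1}|`, monotonically. Choosing `v` with `φ(v) = 1`, every `ξ` therefore has the same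
value as `(φ(ξ̂) v, |ξ_{n+1}|)`, so `ω(s,t) = Φ(s v, t)` represents `Φ`; convexity and
homogeneity of `ω` are inherited from `Φ` through the linear map `(s,t) ↦ (s v, t)`.
-/

namespace IsNorm1

variable {n : ℕ} {Φ : Rn1 n → ℝ}

theorem nonneg (hΦ : IsNorm1 Φ) (ξ : Rn1 n) : 0 ≤ Φ ξ := by
  obtain ⟨-, -, c, hc, hlb⟩ := hΦ
  exact le_trans (by unfold enorm1; positivity) (hlb ξ)

theorem apply_smul_mk_zero (hΦ : IsNorm1 Φ) (s : ℝ) (x : Rn n) :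
    Φ (s • x, 0) = |s| * Φ (x, 0) := by
  simpa using hΦ.2.1 s (x, 0)

theorem apply_zero_mk (hΦ : IsNorm1 Φ) (t : ℝ) : Φ (0, t) = |t| * Φ (0, 1) := by
  simpa using hΦ.2.1 t ((0 : Rn n), 1)

theorem apply_zero_one_pos (hΦ : IsNorm1 Φ) : 0 < Φ ((0 : Rn n), 1) := by
  obtain ⟨-, -, c, hc, hlb⟩ := hΦ
  have h := hlb ((0 : Rn n), 1)
  have he : enorm1 ((0 : Rn n), (1 : ℝ)) = 1 := by simp [enorm1, dotp, dotn]
  rw [he, mul_one] at h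
  linarith

theorem apply_zero_le_apply_zero_iff (hΦ : IsNorm1 Φ) {s t : ℝ} :
    Φ ((0 : Rn n), s) ≤ Φ (0, t) ↔ |s| ≤ |t| := by
  rw [hΦ.apply_zero_mk s, hΦ.apply_zero_mk t]
  exact mul_le_mul_iff_left₀ hΦ.apply_zero_one_pos

/-- Either `v` is a unit vector of `Φ(·,0)`, or `Φ(·,0)` vanishes identically. -/
theorem exists_calibrating_vector (hΦ : IsNorm1 Φ) :
    ∃ v : Rn n, Φ (v, 0) ≤ 1 ∧ ∀ x : Rn n, (1 - Φ (v, 0)) * Φ (x, 0) = 0 := by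
  by_cases h : ∃ x : Rn n, Φ (x, 0) ≠ 0
  · obtain ⟨x, hx⟩ := h
    have hpos : 0 < Φ (x, 0) := lt_of_le_of_ne (hΦ.nonneg _) hx.symm
    have hv : Φ ((Φ (x, 0))⁻¹ • x, 0) = 1 := by
      rw [hΦ.apply_smul_mk_zero, abs_of_pos (inv_pos.mpr hpos), inv_mul_cancel₀ hpos.ne']
    exact ⟨_, hv.le, fun y => by rw [hv, sub_self, zero_mul]⟩
  · push Not at h
    exact ⟨0, by rw [h]; exact zero_le_one, fun y => by rw [h y, mul_zero]⟩

end IsNorm1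

namespace PartMono

variable {n : ℕ} {Φ : Rn1 n → ℝ}

theorem apply_eq (hPM : PartMono Φ) {ξ η : Rn1 n} (h₁ : Φ (ξ.1, 0) = Φ (η.1, 0))
    (h₂ : Φ (0, ξ.2) = Φ (0, η.2)) : Φ ξ = Φ η :=
  le_antisymm (hPM ξ η h₁.le h₂.le) (hPM η ξ h₁.ge h₂.ge)

end PartMono

/-- The correction `(1 - Φ(v,0)) s` vanishes when `Φ(v,0) = 1`; it keeps `ω(1,0) > 0` when
`Φ(·,0) ≡ 0`, as happens for `n = 0`. -/
def profile {n : ℕ} (Φ : Rn1 n → ℝ) (v : Rn n) (s t : ℝ) : ℝ :=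
  Φ (s • v, t) + (1 - Φ (v, 0)) * s

section profile

variable {n : ℕ} {Φ : Rn1 n → ℝ} {v : Rn n}

theorem profile_one_zero : profile Φ v 1 0 = 1 := by
  simp [profile]

theorem profile_zero_one : profile Φ v 0 1 = Φ (0, 1) := by
  simp [profile]

theorem profile_nonneg (hΦ : IsNorm1 Φ) (hv : Φ (v, 0) ≤ 1) {s : ℝ} (hs : 0 ≤ s) (t : ℝ) :
    0 ≤ profile Φ v s t :=
  add_nonneg (hΦ.nonneg _) (mul_nonneg (sub_nonneg.mpr hv) hs)

theorem profile_mul (hΦ : IsNorm1 Φ) {l : ℝ} (hl : 0 ≤ l) (s t : ℝ) :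
    profile Φ v (l * s) (l * t) = l * profile Φ v s t := by
  have h := hΦ.2.1 l (s • v, t)
  rw [Prod.smul_mk, smul_smul, smul_eq_mul, abs_of_nonneg hl] at h
  rw [profile, profile, h]
  ring

theorem convexOn_profile (hΦ : ConvexOn ℝ univ Φ) :
    ConvexOn ℝ univ (fun p : ℝ × ℝ => profile Φ v p.1 p.2) := by
  let g : ℝ × ℝ →ₗ[ℝ] Rn1 n :=
    ((LinearMap.fst ℝ ℝ ℝ).smulRight v).prod (LinearMap.snd ℝ ℝ ℝ)
  have hlin : ConvexOn ℝ univ fun p : ℝ × ℝ => (1 - Φ (v, 0)) * p.1 :=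
    ((1 - Φ (v, 0)) • LinearMap.fst ℝ ℝ ℝ).convexOn convex_univ
  exact (hΦ.comp_linearMap g).add hlin

theorem profile_mono (hΦ : IsNorm1 Φ) (hPM : PartMono Φ) (hv : Φ (v, 0) ≤ 1)
    {s₁ s₂ t₁ t₂ : ℝ} (hs₁ : 0 ≤ s₁) (h₁ : s₁ ≤ t₁) (hs₂ : 0 ≤ s₂) (h₂ : s₂ ≤ t₂) :
    profile Φ v s₁ s₂ ≤ profile Φ v t₁ t₂ := by
  have hfst : Φ (s₁ • v, 0) ≤ Φ (t₁ • v, 0) := by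
    rw [hΦ.apply_smul_mk_zero, hΦ.apply_smul_mk_zero, abs_of_nonneg hs₁,
      abs_of_nonneg (hs₁.trans h₁)]
    exact mul_le_mul_of_nonneg_right h₁ (hΦ.nonneg _)
  have hsnd : Φ (0, s₂) ≤ Φ (0, t₂) := by
    rw [hΦ.apply_zero_le_apply_zero_iff, abs_of_nonneg hs₂, abs_of_nonneg (hs₂.trans h₂)]
    exact h₂
  have hcorr : (1 - Φ (v, 0)) * s₁ ≤ (1 - Φ (v, 0)) * t₁ :=
    mul_le_mul_of_nonneg_left h₁ (sub_nonneg.mpr hv)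
  exact add_le_add (hPM (s₁ • v, s₂) (t₁ • v, t₂) hfst hsnd) hcorr

theorem apply_eq_profile (hΦ : IsNorm1 Φ) (hPM : PartMono Φ)
    (hv : ∀ x : Rn n, (1 - Φ (v, 0)) * Φ (x, 0) = 0) (ξ : Rn1 n) :
    Φ ξ = profile Φ v (Φ (ξ.1, 0)) |ξ.2| := by
  have hfst : Φ (ξ.1, 0) = Φ (Φ (ξ.1, 0) • v, 0) := by
    rw [hΦ.apply_smul_mk_zero, abs_of_nonneg (hΦ.nonneg _)]
    linear_combination hv ξ.1
  have hsnd : Φ (0, ξ.2) = Φ (0, |ξ.2|) := by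
    rw [hΦ.apply_zero_mk ξ.2, hΦ.apply_zero_mk |ξ.2|, abs_abs]
  rw [profile, hPM.apply_eq (η := (Φ (ξ.1, 0) • v, |ξ.2|)) hfst hsnd, hv, add_zero]

end profile

theorem partMono_of_apply_eq {n : ℕ} {Φ : Rn1 n → ℝ} (hΦ : IsNorm1 Φ) {ω : ℝ → ℝ → ℝ}
    (hmono : ∀ s₁ s₂ t₁ t₂ : ℝ, 0 ≤ s₁ → s₁ ≤ t₁ → 0 ≤ s₂ → s₂ ≤ t₂ → ω s₁ s₂ ≤ ω t₁ t₂)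
    (hrep : ∀ ξ : Rn1 n, Φ ξ = ω (Φ (ξ.1, 0)) |ξ.2|) : PartMono Φ := by
  intro ξ η hfst hsnd
  rw [hrep ξ, hrep η]
  exact hmono _ _ _ _ (hΦ.nonneg _) hfst (abs_nonneg _)
    (hΦ.apply_zero_le_apply_zero_iff.mp hsnd)

theorem partially_monotone_characterization {n : ℕ} (Φ : Rn1 n → ℝ)
    (hΦ : IsNorm1 Φ) :
    PartMono Φ ↔ ∃ ω : ℝ → ℝ → ℝ,
      (∀ s t : ℝ, 0 ≤ s → 0 ≤ t → 0 ≤ ω s t) ∧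
      (∀ l s t : ℝ, 0 < l → 0 ≤ s → 0 ≤ t → ω (l * s) (l * t) = l * ω s t) ∧
      ConvexOn ℝ {p : ℝ × ℝ | 0 ≤ p.1 ∧ 0 ≤ p.2} (fun p : ℝ × ℝ => ω p.1 p.2) ∧
      0 < ω 1 0 ∧ 0 < ω 0 1 ∧
      (∀ s₁ s₂ t₁ t₂ : ℝ, 0 ≤ s₁ → s₁ ≤ t₁ → 0 ≤ s₂ → s₂ ≤ t₂ → ω s₁ s₂ ≤ ω t₁ t₂) ∧
      (∀ ξ : Rn1 n, Φ ξ = ω (Φ (ξ.1, (0:ℝ))) |ξ.2|) := by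
  constructor
  · intro hPM
    obtain ⟨v, hv, hcal⟩ := hΦ.exists_calibrating_vector
    refine ⟨profile Φ v, fun s t hs _ => profile_nonneg hΦ hv hs t,
      fun l s t hl _ _ => profile_mul hΦ hl.le s t,
      (convexOn_profile hΦ.1).subset (subset_univ _) ((convex_Ici 0).prod (convex_Ici 0)),
      by rw [profile_one_zero]; exact one_pos,
      by rw [profile_zero_one]; exact hΦ.apply_zero_one_pos,
      fun _ _ _ _ => profile_mono hΦ hPM hv, apply_eq_profile hΦ hPM hcal⟩
  · rintro ⟨ω, -, -, -, -, -, hmono, hrep⟩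
    exact partMono_of_apply_eq hΦ hmono hrep
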